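/- Let T be a rooted symmetric tree with daughter degree sequence (k_1,...,k_{q-1}), all k_i ≥ 1, with level vertex sizes h_i (h_q = 1, h_i = 1 + k_i h_{i+1}). Define f on vertices by: f(root) = 0; for a vertex at even level r identified by sequence (x_1,...,x_{r-1}), f = (k_1 - x_1)h_2 - x_2 h_3 - ... - x_{r-1} h_r - (r-2)/2; for odd level r ≥ 3, f = x_1 h_2 + x_2 h_3 + ... + x_{r-1} h_r + (r-1)/2. Then f is an injective map from the vertex set into {0, 1, ..., h_1 - 1}. -/

import Mathlib

/-!
Deleting the first child index maps a non-root vertex `v` at level `r + 1` to a vertex `v'` at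
level `r` of the tree with degrees `k 2, k 3, …`, whose labels `f'` are again below `h 2`. The
labels satisfy `f v + f' v' = c * h 2`, where `c ∈ [1, k 1]` is `k 1 - x 1` at even and
`x 1 + 1` at odd levels: at even levels this is the definition, at odd levels it follows from
`h 2 = 1 + k 2 * h 3` and the fact that the even and odd formulas are mirror images. So `f v`
lies in the block `((c - 1) * h 2, c * h 2]`; equal labels force equal blocks and equal tail
labels, and injectivity follows by induction on the depth. The bound comes from
`f ≤ k 1 * h 2 = h 1 - 1` at even levels, and at odd levels from the fact that the odd formula
is at most the preorder position of the vertex.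
-/

/-- The `i`-th level vertex size of a rooted symmetric tree with `q` levels and
daughter degree sequence `k 1, …, k (q-1)`:
`h i = 1 + ∑_{j=i}^{q-1} k i * k (i+1) * ⋯ * k j`, so `h q = 1`. -/
def hlvl (q : ℕ) (k : ℕ → ℕ) (i : ℕ) : ℕ :=
  1 + ∑ j ∈ Finset.Icc i (q - 1), ∏ t ∈ Finset.Icc i j, k t

/-- The vertex set of a rooted symmetric tree with `q` levels: a vertex at level
`r.val + 1` is identified with its sequence of child indices `(x_1, …, x_{r.val})`
where `0 ≤ x_i < k i`. -/
def Vertex (q : ℕ) (k : ℕ → ℕ) : Type :=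
  Σ r : Fin q, (i : Fin r.val) → Fin (k (i.val + 1))

instance (q : ℕ) (k : ℕ → ℕ) : Fintype (Vertex q k) := by
  unfold Vertex; infer_instance

instance (q : ℕ) (k : ℕ → ℕ) : DecidableEq (Vertex q k) := by
  unfold Vertex; infer_instance

/-- The (1-based) child-index sequence of a vertex, extended by `0`. -/
def seqOf {q : ℕ} {k : ℕ → ℕ} (v : Vertex q k) (i : ℕ) : ℕ :=
  if h : i - 1 < v.1.val then (v.2 ⟨i - 1, h⟩).val else 0

/-- Level of a vertex (root has level 1). -/
def level {q : ℕ} {k : ℕ → ℕ} (v : Vertex q k) : ℕ := v.1.val + 1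

/-- Odd-level value of the labelling of Theorem 1. -/
def fOdd (q : ℕ) (k : ℕ → ℕ) (x : ℕ → ℕ) (r : ℕ) : ℕ :=
  ∑ i ∈ Finset.Icc 1 (r - 1), x i * hlvl q k (i + 1) + (r - 1) / 2

/-- Even-level value of the labelling of Theorem 1. -/
def fEven (q : ℕ) (k : ℕ → ℕ) (x : ℕ → ℕ) (r : ℕ) : ℕ :=
  (k 1 - x 1) * hlvl q k 2
    - ∑ i ∈ Finset.Icc 2 (r - 1), x i * hlvl q k (i + 1) - (r - 2) / 2

/-- The vertex labelling `f` of Theorem 1. -/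
def flabel (q : ℕ) (k : ℕ → ℕ) (v : Vertex q k) : ℕ :=
  if Even (level v) then fEven q k (seqOf v) (level v) else fOdd q k (seqOf v) (level v)

/-- The parent of a vertex (the root is mapped to itself). -/
def parent {q : ℕ} {k : ℕ → ℕ} (v : Vertex q k) : Vertex q k :=
  ⟨⟨v.1.val - 1, by have := v.1.isLt; omega⟩,
    fun i => v.2 (Fin.castLE (Nat.sub_le _ _) i)⟩

/-- The induced edge label on the edge joining `v` (non-root) to its parent. -/
def glabel (q : ℕ) (k : ℕ → ℕ) (v : Vertex q k) : ℕ :=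
  ((flabel q k v : ℤ) - (flabel q k (parent v) : ℤ)).natAbs

open Finset

lemma sum_Icc_eq_add_sum_Icc_succ {M : Type*} [AddCommMonoid M] (f : ℕ → M) {a b : ℕ}
    (hab : a ≤ b) : ∑ i ∈ Icc a b, f i = f a + ∑ i ∈ Icc (a + 1) b, f i := by
  rw [← add_sum_Ioc_eq_sum_Icc hab, Icc_add_one_left_eq_Ioc]

lemma one_le_hlvl (q : ℕ) (k : ℕ → ℕ) (i : ℕ) : 1 ≤ hlvl q k i := Nat.le_add_right 1 _

lemma hlvl_eq_one_add_mul (q : ℕ) (k : ℕ → ℕ) {i : ℕ} (hi : i < q) :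
    hlvl q k i = 1 + k i * hlvl q k (i + 1) := by
  unfold hlvl
  rw [sum_Icc_eq_add_sum_Icc_succ _ (by omega : i ≤ q - 1), Icc_self, prod_singleton,
    mul_add, mul_one, mul_sum]
  congr 2
  refine sum_congr rfl fun j hj => ?_
  rw [← mul_prod_Ioc_eq_prod_Icc (by simp at hj; omega), Icc_add_one_left_eq_Ioc]

lemma hlvl_shift (q : ℕ) (k : ℕ → ℕ) {i : ℕ} (hi : 1 ≤ i) :
    hlvl q (fun j => k (j + 1)) i = hlvl (q + 1) k (i + 1) := by
  have hIcc : Icc (i + 1) (q + 1 - 1) = Icc (i + 1) (q - 1 + 1) := by ext; simp; omega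
  unfold hlvl
  rw [hIcc, ← map_add_right_Icc, sum_map]
  congr 1
  refine sum_congr rfl fun j _ => ?_
  rw [addRightEmbedding_apply, ← map_add_right_Icc, prod_map]
  rfl

/-- `∑ i ∈ Ico a r, (x i * hlvl q k (i + 1) + 1)` is the preorder position of the vertex with
address `x` inside the subtree rooted at level `a`; the subtree below it still fits after it. -/
lemma sum_mul_hlvl_add_le (q : ℕ) (k x : ℕ → ℕ) {a r : ℕ} (har : a ≤ r) (hrq : r ≤ q)
    (hx : ∀ i ∈ Ico a r, x i < k i) :
    ∑ i ∈ Ico a r, x i * hlvl q k (i + 1) + (r - a) + hlvl q k r ≤ hlvl q k a := by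
  induction r, har using Nat.le_induction with
  | base => simp
  | succ r har ih =>
    have ih := ih (by omega) fun i hi => hx i (by simp at hi ⊢; omega)
    have hxr : (x r + 1) * hlvl q k (r + 1) ≤ k r * hlvl q k (r + 1) :=
      Nat.mul_le_mul_right _ (hx r (by simp; omega))
    rw [hlvl_eq_one_add_mul q k (by omega : r < q)] at ih
    rw [sum_Ico_succ_top har]
    rw [add_mul, one_mul] at hxr
    omega

/-- `x 1, …, x (r - 1)` are the child indices of a vertex at level `r`; other values of `x`
are irrelevant. -/
def IsAddress (k : ℕ → ℕ) (r : ℕ) (x : ℕ → ℕ) : Prop := ∀ i ∈ Ico 1 r, x i < k i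

lemma IsAddress.shift {k x : ℕ → ℕ} {r : ℕ} (hx : IsAddress k (r + 1) x) :
    IsAddress (fun i => k (i + 1)) r (fun i => x (i + 1)) :=
  fun i hi => hx (i + 1) (by simp at hi ⊢; omega)

lemma fOdd_lt_hlvl_one {q r : ℕ} {k x : ℕ → ℕ} (hr : 1 ≤ r) (hrq : r ≤ q)
    (hx : IsAddress k r x) : fOdd q k x r < hlvl q k 1 := by
  have hsum := sum_mul_hlvl_add_le q k x hr hrq hx
  have := one_le_hlvl q k r
  unfold fOdd
  rw [Icc_sub_one_right_eq_Ico_of_not_isMin (by simp; omega)]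
  omega

lemma fEven_add_fOdd {q s : ℕ} {k y : ℕ → ℕ} (hs : 2 ≤ s) (hsq : s ≤ q) (he : Even s)
    (hy : IsAddress k s y) : fEven q k y s + fOdd q k y s = k 1 * hlvl q k 2 := by
  have hsum := sum_mul_hlvl_add_le q k y hs hsq fun i hi => hy i (by simp at hi ⊢; omega)
  have hy1 : y 1 < k 1 := hy 1 (by simp; omega)
  have hk1 : k 1 * hlvl q k 2 = (k 1 - y 1) * hlvl q k 2 + y 1 * hlvl q k 2 := by
    rw [← add_mul, Nat.sub_add_cancel hy1.le]
  have hblock : hlvl q k 2 ≤ (k 1 - y 1) * hlvl q k 2 := Nat.le_mul_of_pos_left _ (by omega)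
  have hhalf : (s - 1) / 2 = (s - 2) / 2 := by obtain ⟨t, rfl⟩ := he; omega
  unfold fEven fOdd
  rw [sum_Icc_eq_add_sum_Icc_succ _ (by omega : 1 ≤ s - 1),
    Icc_sub_one_right_eq_Ico_of_not_isMin (by simp; omega), hhalf, hk1]
  simp only [Nat.reduceAdd]
  omega

lemma fOdd_shift (q : ℕ) (k x : ℕ → ℕ) (s : ℕ) :
    fOdd q (fun i => k (i + 1)) (fun i => x (i + 1)) s
      = ∑ i ∈ Icc 2 s, x i * hlvl (q + 1) k (i + 1) + (s - 1) / 2 := by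
  have hIcc : Icc 2 s = Icc (1 + 1) (s - 1 + 1) := by ext; simp; omega
  unfold fOdd
  rw [hIcc, ← map_add_right_Icc, sum_map]
  congr 1
  refine sum_congr rfl fun i hi => ?_
  rw [hlvl_shift q k (by simp at hi; omega)]
  rfl

lemma fEven_succ (q : ℕ) (k x : ℕ → ℕ) (r : ℕ) :
    fEven (q + 1) k x (r + 1) =
      (k 1 - x 1) * hlvl (q + 1) k 2 - fOdd q (fun i => k (i + 1)) (fun i => x (i + 1)) r := by
  rw [fOdd_shift, fEven, Nat.sub_sub, Nat.add_sub_cancel, show r + 1 - 2 = r - 1 by omega]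

/-- `flabel q k v = labelAt q k (level v) (seqOf v)` holds by definition. -/
def labelAt (q : ℕ) (k : ℕ → ℕ) (r : ℕ) (x : ℕ → ℕ) : ℕ :=
  if Even r then fEven q k x r else fOdd q k x r

lemma labelAt_one (q : ℕ) (k x : ℕ → ℕ) : labelAt q k 1 x = 0 := by
  simp [labelAt, fOdd]

lemma labelAt_lt_hlvl_one {q r : ℕ} {k x : ℕ → ℕ} (hr : 1 ≤ r) (hrq : r ≤ q)
    (hx : IsAddress k r x) : labelAt q k r x < hlvl q k 1 := by
  unfold labelAt
  split_ifs with he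
  · have hr2 : 2 ≤ r := by obtain ⟨t, rfl⟩ := he; omega
    have hblock : (k 1 - x 1) * hlvl q k 2 ≤ k 1 * hlvl q k 2 :=
      Nat.mul_le_mul_right _ (Nat.sub_le _ _)
    have hfEven : fEven q k x r ≤ (k 1 - x 1) * hlvl q k 2 :=
      (Nat.sub_le _ _).trans (Nat.sub_le _ _)
    have hrec : hlvl q k 1 = 1 + k 1 * hlvl q k 2 := hlvl_eq_one_add_mul q k (by omega)
    omega
  · exact fOdd_lt_hlvl_one hr hrq hx

/-- The label of a non-root vertex lies in `((c - 1) * h 2, c * h 2]` for this `c`. -/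
def labelBlock (k : ℕ → ℕ) (r : ℕ) (x : ℕ → ℕ) : ℕ :=
  if Even r then k 1 - x 1 else x 1 + 1

lemma labelAt_succ_add {q r : ℕ} {k x : ℕ → ℕ} (hr : 1 ≤ r) (hrq : r ≤ q)
    (hx : IsAddress k (r + 1) x) :
    labelAt (q + 1) k (r + 1) x + labelAt q (fun i => k (i + 1)) r (fun i => x (i + 1)) =
      labelBlock k (r + 1) x * hlvl (q + 1) k 2 := by
  have hx1 : x 1 < k 1 := hx 1 (by simp; omega)
  have htail := fOdd_lt_hlvl_one hr hrq hx.shift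
  rw [show hlvl q (fun i => k (i + 1)) 1 = hlvl (q + 1) k 2 from hlvl_shift q k le_rfl] at htail
  by_cases he : Even r
  · have hmirror := fEven_add_fOdd (by obtain ⟨t, rfl⟩ := he; omega) hrq he hx.shift
    rw [show hlvl q (fun i => k (i + 1)) 2 = hlvl (q + 1) k 3 from hlvl_shift q k (by norm_num),
      fOdd_shift] at hmirror
    have hrec : hlvl (q + 1) k 2 = 1 + k 2 * hlvl (q + 1) k 3 :=
      hlvl_eq_one_add_mul (q + 1) k (by obtain ⟨t, rfl⟩ := he; omega)
    have hhalf : r / 2 = (r - 1) / 2 + 1 := by obtain ⟨t, rfl⟩ := he; omega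
    simp only [labelAt, labelBlock, Nat.even_add_one, he, not_true_eq_false, if_false, if_true]
    rw [fOdd, Nat.add_sub_cancel, sum_Icc_eq_add_sum_Icc_succ _ hr, add_mul, one_mul, hhalf]
    simp only [Nat.reduceAdd] at hmirror ⊢
    omega
  · have hblock : hlvl (q + 1) k 2 ≤ (k 1 - x 1) * hlvl (q + 1) k 2 :=
      Nat.le_mul_of_pos_left _ (by omega)
    simp only [labelAt, labelBlock, Nat.even_add_one, he, not_false_eq_true, if_false, if_true,
      fEven_succ]
    omega

lemma labelBlock_pos {k x : ℕ → ℕ} (r : ℕ) (hx1 : x 1 < k 1) : 0 < labelBlock k r x := by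
  unfold labelBlock
  split_ifs <;> omega

lemma head_eq_of_labelBlock_eq {k x y : ℕ → ℕ} {r : ℕ} (hx1 : x 1 < k 1) (hy1 : y 1 < k 1)
    (h : labelBlock k r x = labelBlock k r y) : x 1 = y 1 := by
  unfold labelBlock at h
  split_ifs at h <;> omega

lemma Nat.eq_of_add_eq_mul {n a b c d h : ℕ} (ha : a < h) (hb : b < h) (hc : n + a = c * h)
    (hd : n + b = d * h) : c = d := by
  rcases lt_trichotomy c d with hcd | rfl | hcd
  · have := Nat.mul_le_mul_right h (Nat.succ_le_of_lt hcd)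
    rw [Nat.succ_mul] at this
    omega
  · rfl
  · have := Nat.mul_le_mul_right h (Nat.succ_le_of_lt hcd)
    rw [Nat.succ_mul] at this
    omega

lemma labelAt_tail_lt {q r : ℕ} {k x : ℕ → ℕ} (hr : 1 ≤ r) (hrq : r ≤ q)
    (hx : IsAddress k (r + 1) x) :
    labelAt q (fun i => k (i + 1)) r (fun i => x (i + 1)) < hlvl (q + 1) k 2 :=
  hlvl_shift q k le_rfl ▸ labelAt_lt_hlvl_one hr hrq hx.shift

lemma labelAt_succ_pos {q r : ℕ} {k x : ℕ → ℕ} (hr : 1 ≤ r) (hrq : r ≤ q)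
    (hx : IsAddress k (r + 1) x) : 0 < labelAt (q + 1) k (r + 1) x := by
  have hsum := labelAt_succ_add hr hrq hx
  have htail := labelAt_tail_lt hr hrq hx
  have hblock : hlvl (q + 1) k 2 ≤ labelBlock k (r + 1) x * hlvl (q + 1) k 2 :=
    Nat.le_mul_of_pos_left _ (labelBlock_pos (r + 1) (hx 1 (by simp; omega)))
  omega

theorem eq_of_labelAt_eq {q r s : ℕ} {k x y : ℕ → ℕ} (hr : 1 ≤ r) (hrq : r ≤ q) (hs : 1 ≤ s)
    (hsq : s ≤ q) (hx : IsAddress k r x) (hy : IsAddress k s y)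
    (h : labelAt q k r x = labelAt q k s y) : r = s ∧ ∀ i ∈ Ico 1 r, x i = y i := by
  induction q generalizing k r s x y with
  | zero => omega
  | succ q ih =>
    obtain ⟨r, rfl⟩ : ∃ r', r = r' + 1 := ⟨r - 1, by omega⟩
    obtain ⟨s, rfl⟩ : ∃ s', s = s' + 1 := ⟨s - 1, by omega⟩
    obtain rfl | hr : r = 0 ∨ 1 ≤ r := by omega
    all_goals obtain rfl | hs : s = 0 ∨ 1 ≤ s := by omega
    · simp
    · exact absurd h (labelAt_one _ k x ▸ (labelAt_succ_pos (q := q) hs (by omega) hy).ne)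
    · exact absurd h (labelAt_one _ k y ▸ (labelAt_succ_pos (q := q) hr (by omega) hx).ne')
    have hrq : r ≤ q := by omega
    have hsq : s ≤ q := by omega
    have hxsum := labelAt_succ_add hr hrq hx
    have hysum := labelAt_succ_add hs hsq hy
    have hblock := Nat.eq_of_add_eq_mul (labelAt_tail_lt hr hrq hx) (labelAt_tail_lt hs hsq hy)
      (h ▸ hxsum) hysum
    rw [h, hblock] at hxsum
    obtain ⟨rfl, htail⟩ := ih hr hrq hs hsq hx.shift hy.shift (by omega)
    have hhead :=
      head_eq_of_labelBlock_eq (hx 1 (by simp; omega)) (hy 1 (by simp; omega)) hblock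
    refine ⟨rfl, fun i hi => ?_⟩
    match i, hi with
    | 0, hi => simp at hi
    | 1, _ => exact hhead
    | j + 2, hi => exact htail (j + 1) (by simp at hi ⊢; omega)

lemma isAddress_seqOf {q : ℕ} {k : ℕ → ℕ} (v : Vertex q k) :
    IsAddress k (level v) (seqOf v) := by
  intro i hi
  simp only [mem_Ico, level] at hi
  rw [seqOf, dif_pos (by omega)]
  simpa [show i - 1 + 1 = i by omega] using (v.2 ⟨i - 1, by omega⟩).isLt

lemma Vertex.ext_of_seqOf {q : ℕ} {k : ℕ → ℕ} {v w : Vertex q k} (hlev : level v = level w)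
    (hseq : ∀ i ∈ Ico 1 (level v), seqOf v i = seqOf w i) : v = w := by
  obtain ⟨r, a⟩ := v
  obtain ⟨s, b⟩ := w
  obtain rfl : r = s := Fin.ext (by simpa [level] using hlev)
  congr
  funext i
  exact Fin.ext (by simpa [seqOf] using hseq (i + 1) (by simp [level]))

theorem flabel_injective_and_bounded_general (q : ℕ) (k : ℕ → ℕ) :
    Function.Injective (flabel q k) ∧ ∀ v : Vertex q k, flabel q k v ≤ hlvl q k 1 - 1 := by
  have hlev (v : Vertex q k) : 1 ≤ level v ∧ level v ≤ q := ⟨by simp [level], v.1.isLt⟩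
  refine ⟨fun v w hvw => ?_, fun v => ?_⟩
  · obtain ⟨hrs, hseq⟩ := eq_of_labelAt_eq (hlev v).1 (hlev v).2 (hlev w).1 (hlev w).2
      (isAddress_seqOf v) (isAddress_seqOf w) hvw
    exact Vertex.ext_of_seqOf hrs hseq
  · have := labelAt_lt_hlvl_one (hlev v).1 (hlev v).2 (isAddress_seqOf v)
    exact Nat.le_sub_one_of_lt this

/-- Theorem 1 (vertex part): the labelling `f` of Theorem 1 is an injective map
from the vertex set of a rooted symmetric tree into `{0, 1, …, h 1 - 1}`. -/
theorem flabel_injective_and_bounded (q : ℕ) (k : ℕ → ℕ) (hq : 1 ≤ q)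
    (hk : ∀ i, 1 ≤ k i) :
    Function.Injective (flabel q k) ∧ ∀ v : Vertex q k, flabel q k v ≤ hlvl q k 1 - 1 :=
  flabel_injective_and_bounded_general q k
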